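/- Let M be a Wall form and let x_1, …, x_k ∈ M₋ and y_1, …, y_k ∈ M₊ be elements such that λ(x_i, y_j) = δ_{ij}, μ(y_i, y_j) = 0, α₋(x_i) = 0 and α₊(y_i) = 0 for all i, j = 1, …, k. Then there exists a unique morphism of Wall forms f : W^k → M such that f₋(a_i) = x_i and f₊(b_i) = y_i for i = 1, …, k. -/

import Mathlib

/-!
Framework: `H`-pairs and Wall forms, following N. Perlmutter,
"Homological stability for the moduli spaces of products of spheres".

A form parameter `(G, ∂, π, ε)` is recorded together with the two
compatibility identities `∂(ε•h) = ∂(h)` and `π(∂(h)) = h + ε•h`, which hold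
in the geometric situation considered in the paper and which are exactly the
conditions needed for the standard Wall forms `W^g` to exist.
-/

section HPairs

/-- An `H`-pair: a pair of abelian groups together with a ℤ-bilinear
(i.e. biadditive) map `τ : M₋ × H → M₊`. -/
structure HPair (H : Type) [AddCommGroup H] where
  Neg : Type
  Pos : Type
  [negGrp : AddCommGroup Neg]
  [posGrp : AddCommGroup Pos]
  tau : Neg →+ H →+ Pos

attribute [instance] HPair.negGrp HPair.posGrp

variable {H : Type} [AddCommGroup H]

/-- An `H`-map of `H`-pairs. -/
structure HPairHom (M N : HPair H) where
  neg : M.Neg →+ N.Neg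
  pos : M.Pos →+ N.Pos
  comm : ∀ x h, pos (M.tau x h) = N.tau (neg x) h

/-- An isomorphism of `H`-pairs. -/
structure HPairIso (M N : HPair H) where
  toHom : HPairHom M N
  invHom : HPairHom N M
  left_neg : ∀ x, invHom.neg (toHom.neg x) = x
  right_neg : ∀ x, toHom.neg (invHom.neg x) = x
  left_pos : ∀ y, invHom.pos (toHom.pos y) = y
  right_pos : ∀ y, toHom.pos (invHom.pos y) = y

/-- An `H`-pair is finitely generated if both component groups are. -/
def HPair.FG (M : HPair H) : Prop :=
  AddGroup.FG M.Neg ∧ AddGroup.FG M.Pos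

/-- The componentwise direct sum of two `H`-pairs. -/
@[reducible] def HPair.sum (M N : HPair H) : HPair H where
  Neg := M.Neg × N.Neg
  Pos := M.Pos × N.Pos
  tau :=
    { toFun := fun x => (M.tau x.1).prod (N.tau x.2)
      map_zero' := by
        refine AddMonoidHom.ext fun h => ?_
        simp [Prod.ext_iff]
      map_add' := by
        intro x y
        refine AddMonoidHom.ext fun h => ?_
        simp [Prod.ext_iff] }

/-- The left inclusion `M → M ⊕ N`. -/
def HPairHom.inl (M N : HPair H) : HPairHom M (M.sum N) where
  neg := AddMonoidHom.inl M.Neg N.Neg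
  pos := AddMonoidHom.inl M.Pos N.Pos
  comm := by
    intro x h
    simp [HPair.sum, Prod.ext_iff]

/-- The right inclusion `N → M ⊕ N`. -/
def HPairHom.inr (M N : HPair H) : HPairHom N (M.sum N) where
  neg := AddMonoidHom.inr M.Neg N.Neg
  pos := AddMonoidHom.inr M.Pos N.Pos
  comm := by
    intro x h
    simp [HPair.sum, Prod.ext_iff]

/-- The `H`-pair `P⁰`, with `P⁰₋ = 0`, `P⁰₊ = ℤ` and `τ = 0`. -/
def P0 (H : Type) [AddCommGroup H] : HPair H where
  Neg := PUnit
  Pos := ℤ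
  tau := 0

/-- The `H`-pair `P¹`, with `P¹₋ = ℤ`, `P¹₊ = H` and `τ(t, h) = t • h`. -/
def P1 (H : Type) [AddCommGroup H] : HPair H where
  Neg := ℤ
  Pos := H
  tau := zmultiplesHom (H →+ H) (AddMonoidHom.id H)

/-- The generating-set length `d(H)`: the minimal `k` such that there is a
surjection `ℤ^k → H`. -/
noncomputable def dlen (H : Type) [AddCommGroup H] : ℕ :=
  sInf { k : ℕ | ∃ φ : (Fin k → ℤ) →+ H, Function.Surjective φ }

end HPairs

section WallForms

variable {H : Type} [AddCommGroup H]

/-- A form parameter `(G, ∂, π, ε)` for the category of `H`-pairs.  The two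
compatibility identities `bd_eps` and `pi_bd` hold in the geometric setting of
the paper and are needed for the standard Wall forms to exist. -/
structure FormParameter (H : Type) [AddCommGroup H] where
  G : HPair H
  bd : H →+ G.Pos
  pi : G.Pos →+ H
  eps : ℤ
  eps_pm : eps = 1 ∨ eps = -1
  bd_eps : ∀ h : H, bd (eps • h) = bd h
  pi_bd : ∀ h : H, pi (bd h) = h + eps • h

variable {P : FormParameter H}

/-- A Wall form structure (with parameter `P`) on the `H`-pair `C`. -/
structure WallAux (P : FormParameter H) (C : HPair H) where
  lam : C.Neg →+ C.Pos →+ ℤ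
  mu : C.Pos →+ C.Pos →+ H
  alphaNeg : C.Neg →+ P.G.Neg
  alphaPos : C.Pos → P.G.Pos
  mu_symm : ∀ y y', mu y y' = P.eps • mu y' y
  lam_tau : ∀ x x' h, lam x (C.tau x' h) = 0
  mu_tau : ∀ x h y, mu (C.tau x h) y = lam x y • h
  alphaPos_add : ∀ y y', alphaPos (y + y') = alphaPos y + alphaPos y' + P.bd (mu y y')
  mu_diag : ∀ y, mu y y = P.pi (alphaPos y)
  alphaPos_tau : ∀ x h, alphaPos (C.tau x h) = P.G.tau (alphaNeg x) h

/-- A Wall form with parameter `P`: a finitely generated `H`-pair together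
with a Wall form structure. -/
structure WallForm (P : FormParameter H) where
  carrier : HPair H
  fgNeg : AddGroup.FG carrier.Neg
  fgPos : AddGroup.FG carrier.Pos
  str : WallAux P carrier

/-- The property of an `H`-map to preserve all values of `λ`, `μ`, `α₋`, `α₊`. -/
def IsWallHom {C D : HPair H} (S : WallAux P C) (T : WallAux P D)
    (f : HPairHom C D) : Prop :=
  (∀ x y, T.lam (f.neg x) (f.pos y) = S.lam x y) ∧
  (∀ y y', T.mu (f.pos y) (f.pos y') = S.mu y y') ∧
  (∀ x, T.alphaNeg (f.neg x) = S.alphaNeg x) ∧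
  (∀ y, T.alphaPos (f.pos y) = S.alphaPos y)

/-- A morphism of Wall forms. -/
structure WallHom (M N : WallForm P) where
  hom : HPairHom M.carrier N.carrier
  isWall : IsWallHom M.str N.str hom

/-- An isomorphism of Wall forms: a morphism with a two-sided inverse morphism. -/
structure WallIso (M N : WallForm P) where
  toHom : WallHom M N
  invHom : WallHom N M
  left_neg : ∀ x, invHom.hom.neg (toHom.hom.neg x) = x
  right_neg : ∀ x, toHom.hom.neg (invHom.hom.neg x) = x
  left_pos : ∀ y, invHom.hom.pos (toHom.hom.pos y) = y
  right_pos : ∀ y, toHom.hom.pos (invHom.hom.pos y) = y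

end WallForms
section Extra

variable {H : Type} [AddCommGroup H] {P : FormParameter H}

/-- A subgroup of a finitely generated abelian group is finitely generated. -/
theorem addGroup_fg_subgroup {A : Type} [AddCommGroup A] (hA : AddGroup.FG A)
    (S : AddSubgroup A) : AddGroup.FG S := by
  haveI : Module.Finite ℤ A := Module.Finite.iff_addGroup_fg.mpr hA
  haveI : IsNoetherian ℤ A := isNoetherian_of_isNoetherianRing_of_finite ℤ A
  have h : (AddSubgroup.toIntSubmodule S).FG := IsNoetherian.noetherian _
  have h2 : Module.Finite ℤ (AddSubgroup.toIntSubmodule S) := Module.Finite.iff_fg.mpr h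
  exact Module.Finite.iff_addGroup_fg.mp h2

theorem addGroup_fg_of_module_finite {A : Type} [AddCommGroup A]
    [Module.Finite ℤ A] : AddGroup.FG A :=
  Module.Finite.iff_addGroup_fg.mp inferInstance

end Extra

section StdWall

variable {H : Type} [AddCommGroup H]

/-- The underlying `H`-pair of the standard Wall form of rank `g`:
`W^g₋ = ℤ^g` and `W^g₊ = ℤ^g × H^g`  (the first factor records the
`b`-coordinates, the second the `τ(a_i, -)`-coordinates). -/
@[reducible] def stdPair (H : Type) [AddCommGroup H] (g : ℕ) : HPair H where
  Neg := Fin g → ℤ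
  Pos := (Fin g → ℤ) × (Fin g → H)
  tau :=
    { toFun := fun x =>
        { toFun := fun h => (0, fun i => x i • h)
          map_zero' := by
            refine Prod.ext rfl ?_
            funext i
            simp
          map_add' := by
            intro h h'
            refine Prod.ext (by simp) ?_
            funext i
            simp [smul_add] }
      map_zero' := by
        refine AddMonoidHom.ext fun h => ?_
        refine Prod.ext rfl ?_
        funext i
        simp
      map_add' := by
        intro x x'
        refine AddMonoidHom.ext fun h => ?_
        refine Prod.ext (by simp) ?_
        funext i
        simp [add_smul] }

variable (P : FormParameter H)

/-- The standard Wall form `W^g` of rank `g` with parameter `P`. -/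
def stdWall [AddGroup.FG H] (g : ℕ) : WallForm P where
  carrier := stdPair H g
  fgNeg := by
    have : Module.Finite ℤ (Fin g → ℤ) := inferInstance
    exact addGroup_fg_of_module_finite
  fgPos := by
    haveI : Module.Finite ℤ H := Module.Finite.iff_addGroup_fg.mpr ‹AddGroup.FG H›
    have : Module.Finite ℤ ((Fin g → ℤ) × (Fin g → H)) := inferInstance
    exact addGroup_fg_of_module_finite
  str :=
    { lam :=
        { toFun := fun x =>
            { toFun := fun w => ∑ i, x i * w.1 i
              map_zero' := by simp
              map_add' := by
                intro w w'
                simp [mul_add, Finset.sum_add_distrib] }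
          map_zero' := by
            refine AddMonoidHom.ext fun w => ?_
            show (∑ i, (0 : Fin g → ℤ) i * w.1 i) = 0
            simp
          map_add' := by
            intro x x'
            refine AddMonoidHom.ext fun w => ?_
            simp [add_mul, Finset.sum_add_distrib] }
      mu :=
        { toFun := fun w =>
            { toFun := fun w' => (∑ i, w'.1 i • w.2 i) + P.eps • ∑ i, w.1 i • w'.2 i
              map_zero' := by simp
              map_add' := by
                intro w' w''
                simp only [Prod.fst_add, Prod.snd_add, Pi.add_apply, add_smul, smul_add,
                  Finset.sum_add_distrib]
                abel }
          map_zero' := by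
            refine AddMonoidHom.ext fun w' => ?_
            simp
          map_add' := by
            intro w w'
            refine AddMonoidHom.ext fun w'' => ?_
            simp only [Prod.fst_add, Prod.snd_add, Pi.add_apply, add_smul, smul_add,
              Finset.sum_add_distrib, AddMonoidHom.coe_mk, ZeroHom.coe_mk,
              AddMonoidHom.add_apply]
            abel }
      alphaNeg := 0
      alphaPos := fun w => P.bd (∑ i, w.1 i • w.2 i)
      mu_symm := by
        intro y y'
        have he : P.eps * P.eps = 1 := by
          rcases P.eps_pm with h | h <;> simp [h]
        show (∑ i, y'.1 i • y.2 i) + P.eps • ∑ i, y.1 i • y'.2 i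
            = P.eps • ((∑ i, y.1 i • y'.2 i) + P.eps • ∑ i, y'.1 i • y.2 i)
        rw [smul_add, smul_smul, he, one_smul, add_comm]
      lam_tau := by
        intro x x' h
        show (∑ i, x i * (0 : Fin _ → ℤ) i) = 0
        simp
      mu_tau := by
        intro x h y
        show (∑ i, y.1 i • (fun i => x i • h) i) + P.eps • ∑ i, (0 : Fin _ → ℤ) i • y.2 i
            = (∑ i, x i * y.1 i) • h
        simp only [Pi.zero_apply, zero_smul, Finset.sum_const_zero, smul_zero, add_zero]
        rw [Finset.sum_smul]
        congr 1
        funext i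
        rw [smul_smul, mul_comm]
      alphaPos_add := by
        intro y y'
        show P.bd (∑ i, (y.1 i + y'.1 i) • (y.2 i + y'.2 i))
            = P.bd (∑ i, y.1 i • y.2 i) + P.bd (∑ i, y'.1 i • y'.2 i)
              + P.bd ((∑ i, y'.1 i • y.2 i) + P.eps • ∑ i, y.1 i • y'.2 i)
        have expand : ∀ i : Fin _, (y.1 i + y'.1 i) • (y.2 i + y'.2 i)
            = (y.1 i • y.2 i + y'.1 i • y'.2 i) + (y'.1 i • y.2 i + y.1 i • y'.2 i) := by
          intro i
          rw [add_smul, smul_add, smul_add]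
          abel
        rw [Finset.sum_congr rfl fun i _ => expand i, Finset.sum_add_distrib,
          Finset.sum_add_distrib, Finset.sum_add_distrib, map_add, map_add, map_add, map_add,
          P.bd_eps]
      mu_diag := by
        intro y
        show (∑ i, y.1 i • y.2 i) + P.eps • ∑ i, y.1 i • y.2 i
            = P.pi (P.bd (∑ i, y.1 i • y.2 i))
        rw [P.pi_bd]
      alphaPos_tau := by
        intro x h
        show P.bd (∑ i, (0 : Fin _ → ℤ) i • (fun i => x i • h) i) = P.G.tau ((0 : _ →+ _) x) h
        simp }

variable {P}

/-- The `i`-th standard generator `a_i ∈ W^g₋`. -/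
def stdA [AddGroup.FG H] {g : ℕ} (i : Fin g) : (stdWall P g).carrier.Neg :=
  Pi.single i 1

/-- The `i`-th standard generator `b_i ∈ W^g₊`. -/
def stdB [AddGroup.FG H] {g : ℕ} (i : Fin g) : (stdWall P g).carrier.Pos :=
  (Pi.single i 1, 0)

end StdWall
section SubPairs

variable {H : Type} [AddCommGroup H] {P : FormParameter H}

/-- A sub-`H`-pair of the `H`-pair `C`. -/
structure SubPair (C : HPair H) where
  neg : AddSubgroup C.Neg
  pos : AddSubgroup C.Pos
  tau_mem : ∀ x ∈ neg, ∀ h, C.tau x h ∈ pos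

/-- The componentwise intersection of two sub-`H`-pairs. -/
def SubPair.inf {C : HPair H} (N N' : SubPair C) : SubPair C where
  neg := N.neg ⊓ N'.neg
  pos := N.pos ⊓ N'.pos
  tau_mem := fun x hx h => ⟨N.tau_mem x hx.1 h, N'.tau_mem x hx.2 h⟩

/-- The image of an `H`-map, as a sub-`H`-pair of the codomain. -/
def HPairHom.rangeSub {C D : HPair H} (f : HPairHom C D) : SubPair D where
  neg := f.neg.range
  pos := f.pos.range
  tau_mem := by
    rintro x ⟨a, rfl⟩ h
    exact ⟨C.tau a h, f.comm a h⟩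

/-- The kernel of an `H`-map, as a sub-`H`-pair of the domain. -/
def HPairHom.kerSub {C D : HPair H} (f : HPairHom C D) : SubPair C where
  neg := f.neg.ker
  pos := f.pos.ker
  tau_mem := by
    intro x hx h
    have hx' : f.neg x = 0 := hx
    have h2 : f.pos (C.tau x h) = D.tau (f.neg x) h := f.comm x h
    rw [hx'] at h2
    have h3 : f.pos (C.tau x h) = 0 := by
      rw [h2, map_zero, AddMonoidHom.zero_apply]
    exact h3

/-- The orthogonal complement of a sub-`H`-pair, with respect to a Wall form
structure `S` on the ambient `H`-pair. -/
def SubPair.perp {C : HPair H} (S : WallAux P C) (N : SubPair C) : SubPair C where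
  neg :=
    { carrier := { x | ∀ w ∈ N.pos, S.lam x w = 0 }
      add_mem' := by
        intro a b ha hb w hw
        rw [map_add, AddMonoidHom.add_apply, ha w hw, hb w hw, add_zero]
      zero_mem' := by
        intro w hw
        rw [map_zero, AddMonoidHom.zero_apply]
      neg_mem' := by
        intro a ha w hw
        rw [map_neg, AddMonoidHom.neg_apply, ha w hw, neg_zero] }
  pos :=
    { carrier := { y | (∀ v ∈ N.neg, S.lam v y = 0) ∧ ∀ w ∈ N.pos, S.mu y w = 0 }
      add_mem' := by
        intro a b ha hb
        refine ⟨fun v hv => ?_, fun w hw => ?_⟩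
        · rw [map_add, ha.1 v hv, hb.1 v hv, add_zero]
        · rw [map_add, AddMonoidHom.add_apply, ha.2 w hw, hb.2 w hw, add_zero]
      zero_mem' := by
        refine ⟨fun v hv => ?_, fun w hw => ?_⟩
        · rw [map_zero]
        · rw [map_zero, AddMonoidHom.zero_apply]
      neg_mem' := by
        intro a ha
        refine ⟨fun v hv => ?_, fun w hw => ?_⟩
        · rw [map_neg, ha.1 v hv, neg_zero]
        · rw [map_neg, AddMonoidHom.neg_apply, ha.2 w hw, neg_zero] }
  tau_mem := by
    intro x hx h
    refine ⟨fun v hv => S.lam_tau v x h, fun w hw => ?_⟩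
    rw [S.mu_tau x h w, hx w hw, zero_smul]

/-- Orthogonality of two sub-`H`-pairs with respect to a Wall form structure
`S`: trivial intersection and mutual containment in orthogonal complements. -/
def OrthogonalIn {C : HPair H} (S : WallAux P C) (N N' : SubPair C) : Prop :=
  N.neg ⊓ N'.neg = ⊥ ∧ N.pos ⊓ N'.pos = ⊥ ∧
  N.neg ≤ (N'.perp S).neg ∧ N.pos ≤ (N'.perp S).pos ∧
  N'.neg ≤ (N.perp S).neg ∧ N'.pos ≤ (N.perp S).pos

/-- The underlying `H`-pair of a sub-`H`-pair. -/
@[reducible] def SubPair.toPair {C : HPair H} (N : SubPair C) : HPair H where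
  Neg := N.neg
  Pos := N.pos
  tau :=
    { toFun := fun x =>
        { toFun := fun h => ⟨C.tau x h, N.tau_mem x x.2 h⟩
          map_zero' := by
            apply Subtype.ext
            simp
          map_add' := by
            intro h h'
            apply Subtype.ext
            simp }
      map_zero' := by
        refine AddMonoidHom.ext fun h => ?_
        apply Subtype.ext
        simp
      map_add' := by
        intro x x'
        refine AddMonoidHom.ext fun h => ?_
        apply Subtype.ext
        simp }

/-- The restriction of a Wall form structure to a sub-`H`-pair. -/
def SubPair.restrict {C : HPair H} (S : WallAux P C) (N : SubPair C) :
    WallAux P N.toPair where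
  lam :=
    { toFun := fun x => (S.lam (x : C.Neg)).comp N.pos.subtype
      map_zero' := by
        refine AddMonoidHom.ext fun y => ?_
        simp
      map_add' := by
        intro x x'
        refine AddMonoidHom.ext fun y => ?_
        simp }
  mu :=
    { toFun := fun y => (S.mu (y : C.Pos)).comp N.pos.subtype
      map_zero' := by
        refine AddMonoidHom.ext fun y => ?_
        simp
      map_add' := by
        intro y y'
        refine AddMonoidHom.ext fun y'' => ?_
        simp }
  alphaNeg := S.alphaNeg.comp N.neg.subtype
  alphaPos := fun y => S.alphaPos (y : C.Pos)
  mu_symm := fun y y' => S.mu_symm (y : C.Pos) y'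
  lam_tau := fun x x' h => S.lam_tau (x : C.Neg) x' h
  mu_tau := fun x h y => S.mu_tau (x : C.Neg) h y
  alphaPos_add := fun y y' => S.alphaPos_add (y : C.Pos) y'
  mu_diag := fun y => S.mu_diag (y : C.Pos)
  alphaPos_tau := fun x h => S.alphaPos_tau (x : C.Neg) h

/-- A sub-`H`-pair of (the carrier of) a Wall form is itself a Wall form, via
the restricted structure maps. -/
def SubPair.toWall {M : WallForm P} (N : SubPair M.carrier) : WallForm P where
  carrier := N.toPair
  fgNeg := addGroup_fg_subgroup M.fgNeg N.neg
  fgPos := addGroup_fg_subgroup M.fgPos N.pos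
  str := N.restrict M.str

end SubPairs
section SumAndRank

variable {H : Type} [AddCommGroup H] {P : FormParameter H}

/-- The orthogonal direct sum of two Wall forms. -/
def WallForm.sum (M N : WallForm P) : WallForm P where
  carrier := M.carrier.sum N.carrier
  fgNeg := by
    haveI : Module.Finite ℤ M.carrier.Neg := Module.Finite.iff_addGroup_fg.mpr M.fgNeg
    haveI : Module.Finite ℤ N.carrier.Neg := Module.Finite.iff_addGroup_fg.mpr N.fgNeg
    have : Module.Finite ℤ (M.carrier.Neg × N.carrier.Neg) := inferInstance
    exact Module.Finite.iff_addGroup_fg.mp this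
  fgPos := by
    haveI : Module.Finite ℤ M.carrier.Pos := Module.Finite.iff_addGroup_fg.mpr M.fgPos
    haveI : Module.Finite ℤ N.carrier.Pos := Module.Finite.iff_addGroup_fg.mpr N.fgPos
    have : Module.Finite ℤ (M.carrier.Pos × N.carrier.Pos) := inferInstance
    exact Module.Finite.iff_addGroup_fg.mp this
  str :=
    { lam :=
        { toFun := fun x => (M.str.lam x.1).coprod (N.str.lam x.2)
          map_zero' := by
            refine AddMonoidHom.ext fun y => ?_
            simp
          map_add' := by
            intro x x'
            refine AddMonoidHom.ext fun y => ?_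
            simp
            abel }
      mu :=
        { toFun := fun y => (M.str.mu y.1).coprod (N.str.mu y.2)
          map_zero' := by
            refine AddMonoidHom.ext fun y' => ?_
            simp
          map_add' := by
            intro y y'
            refine AddMonoidHom.ext fun y'' => ?_
            simp
            abel }
      alphaNeg := (M.str.alphaNeg).coprod (N.str.alphaNeg)
      alphaPos := fun y => M.str.alphaPos y.1 + N.str.alphaPos y.2
      mu_symm := by
        intro y y'
        show M.str.mu y.1 y'.1 + N.str.mu y.2 y'.2
            = P.eps • (M.str.mu y'.1 y.1 + N.str.mu y'.2 y.2)
        rw [smul_add, M.str.mu_symm y.1 y'.1, N.str.mu_symm y.2 y'.2]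
      lam_tau := by
        intro x x' h
        show M.str.lam x.1 (M.carrier.tau x'.1 h) + N.str.lam x.2 (N.carrier.tau x'.2 h) = 0
        rw [M.str.lam_tau, N.str.lam_tau, add_zero]
      mu_tau := by
        intro x h y
        show M.str.mu (M.carrier.tau x.1 h) y.1 + N.str.mu (N.carrier.tau x.2 h) y.2
            = (M.str.lam x.1 y.1 + N.str.lam x.2 y.2) • h
        rw [M.str.mu_tau, N.str.mu_tau, add_smul]
      alphaPos_add := by
        intro y y'
        show M.str.alphaPos (y.1 + y'.1) + N.str.alphaPos (y.2 + y'.2)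
            = (M.str.alphaPos y.1 + N.str.alphaPos y.2)
              + (M.str.alphaPos y'.1 + N.str.alphaPos y'.2)
              + P.bd (M.str.mu y.1 y'.1 + N.str.mu y.2 y'.2)
        rw [M.str.alphaPos_add, N.str.alphaPos_add, map_add]
        abel
      mu_diag := by
        intro y
        show M.str.mu y.1 y.1 + N.str.mu y.2 y.2
            = P.pi (M.str.alphaPos y.1 + N.str.alphaPos y.2)
        rw [map_add, M.str.mu_diag, N.str.mu_diag]
      alphaPos_tau := by
        intro x h
        show M.str.alphaPos (M.carrier.tau x.1 h) + N.str.alphaPos (N.carrier.tau x.2 h)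
            = P.G.tau (M.str.alphaNeg x.1 + N.str.alphaNeg x.2) h
        rw [M.str.alphaPos_tau, N.str.alphaPos_tau, map_add, AddMonoidHom.add_apply] }

variable [AddGroup.FG H]

/-- `rankGE M g` expresses the inequality `r(M) ≥ g` for the rank of a Wall
form: there exists a morphism of Wall forms `W^g → M`. -/
def rankGE (M : WallForm P) (g : ℕ) : Prop :=
  Nonempty (WallHom (stdWall P g) M)

/-- `srankGE M g` expresses the inequality `r̄(M) ≥ g` for the stable rank of
a Wall form: `r(M ⊕ W^j) ≥ g + j` for some `j`. -/
def srankGE (M : WallForm P) (g : ℕ) : Prop :=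
  ∃ j : ℕ, rankGE (M.sum (stdWall P j)) (g + j)

end SumAndRank

section Duality

variable {H : Type} [AddCommGroup H] {P : FormParameter H}

/-- The duality map `T⁰ : M₋ → Hom(M, P⁰)` of a Wall form. -/
def dualT0 (M : WallForm P) (v : M.carrier.Neg) : HPairHom M.carrier (P0 H) where
  neg := 0
  pos := M.str.lam v
  comm := by
    intro x h
    show M.str.lam v (M.carrier.tau x h) = ((P0 H).tau 0) h
    rw [M.str.lam_tau]
    show (0 : ℤ) = ((0 : _ →+ (H →+ ℤ)) 0) h
    first
      | rfl
      | rw [AddMonoidHom.zero_apply, AddMonoidHom.zero_apply]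

/-- The duality map `T¹ : M₊ → Hom(M, P¹)` of a Wall form. -/
def dualT1 (M : WallForm P) (w : M.carrier.Pos) : HPairHom M.carrier (P1 H) where
  neg := M.str.lam.flip w
  pos := M.str.mu.flip w
  comm := by
    intro x h
    show M.str.mu (M.carrier.tau x h) w = (P1 H).tau (M.str.lam x w) h
    rw [M.str.mu_tau]
    show M.str.lam x w • h = (M.str.lam x w • AddMonoidHom.id H) h
    simp

end Duality

/-!
`W^k₋` is free on the `a_i`, and `W^k₊` is generated by the `b_i` together with the `τ(a_i, h)`.
So an `H`-map out of `W^k` is determined by the images of the `a_i` and `b_i`, and any choice of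
images extends to an `H`-map. Preservation of the Wall form structure can then be checked on
generators: `λ`, `μ` and `α₋` are additive in each variable, `μ(τ(x, h), -)` is determined by `λ`
(`mu_tau`), and once `μ` is preserved, `alphaPos_add` makes `y ↦ α₊(f y) - α₊(y)` additive, while
`alphaPos_tau` makes it vanish on the `τ(a_i, h)`.
-/

attribute [ext] HPairHom WallHom

section MorphismCriteria

variable {H : Type} [AddCommGroup H] {P : FormParameter H} {C D : HPair H}
  {S : WallAux P C} {T : WallAux P D} {f : HPairHom C D}

theorem mu_map_tau_left_of_lam (hlam : ∀ x y, T.lam (f.neg x) (f.pos y) = S.lam x y)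
    (x : C.Neg) (h : H) (y : C.Pos) :
    T.mu (f.pos (C.tau x h)) (f.pos y) = S.mu (C.tau x h) y := by
  rw [f.comm, T.mu_tau, S.mu_tau, hlam]

theorem mu_map_tau_right_of_lam (hlam : ∀ x y, T.lam (f.neg x) (f.pos y) = S.lam x y)
    (y : C.Pos) (x : C.Neg) (h : H) :
    T.mu (f.pos y) (f.pos (C.tau x h)) = S.mu y (C.tau x h) := by
  rw [T.mu_symm, S.mu_symm, mu_map_tau_left_of_lam hlam]

theorem alphaPos_map_tau_of_alphaNeg (han : ∀ x, T.alphaNeg (f.neg x) = S.alphaNeg x)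
    (x : C.Neg) (h : H) :
    T.alphaPos (f.pos (C.tau x h)) = S.alphaPos (C.tau x h) := by
  rw [f.comm, T.alphaPos_tau, S.alphaPos_tau, han]

def alphaPosDefect (hmu : ∀ y y', T.mu (f.pos y) (f.pos y') = S.mu y y') : C.Pos →+ P.G.Pos :=
  AddMonoidHom.mk' (fun y => T.alphaPos (f.pos y) - S.alphaPos y) fun y y' => by
    simp only [map_add, T.alphaPos_add, S.alphaPos_add, hmu]
    abel

theorem alphaPos_map_eq_of_alphaPosDefect_eq_zero
    {hmu : ∀ y y', T.mu (f.pos y) (f.pos y') = S.mu y y'} (hd : alphaPosDefect hmu = 0)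
    (y : C.Pos) : T.alphaPos (f.pos y) = S.alphaPos y :=
  sub_eq_zero.mp (DFunLike.congr_fun hd y)

end MorphismCriteria

section StdWallGenerators

variable {H : Type} [AddCommGroup H] [AddGroup.FG H] {P : FormParameter H} {k : ℕ}

theorem stdWall_tau_stdA (i : Fin k) (h : H) :
    (stdWall P k).carrier.tau (stdA i) h = ((0 : Fin k → ℤ), (Pi.single i h : Fin k → H)) := by
  refine Prod.ext rfl ?_
  show (fun j => (Pi.single i 1 : Fin k → ℤ) j • h) = Pi.single i h
  funext j
  by_cases hji : j = i <;> simp [hji]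

theorem stdWall_lam_stdA_stdB (i j : Fin k) :
    (stdWall P k).str.lam (stdA i) (stdB j) = if i = j then 1 else 0 := by
  show ∑ l, (Pi.single i 1 : Fin k → ℤ) l * (Pi.single j 1 : Fin k → ℤ) l = _
  by_cases hij : i = j
  · subst hij
    simp [Pi.single_apply]
  · simp [Pi.single_apply, hij, Ne.symm hij]

theorem stdWall_mu_stdB_stdB (i j : Fin k) : (stdWall P k).str.mu (stdB i) (stdB j) = 0 := by
  show (∑ l, (Pi.single j 1 : Fin k → ℤ) l • (0 : Fin k → H) l)
    + P.eps • ∑ l, (Pi.single i 1 : Fin k → ℤ) l • (0 : Fin k → H) l = 0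
  simp

theorem stdWall_alphaPos_stdB (i : Fin k) : (stdWall P k).str.alphaPos (stdB i) = 0 := by
  show P.bd (∑ l, (Pi.single i 1 : Fin k → ℤ) l • (0 : Fin k → H) l) = 0
  simp

theorem stdNeg_hom_ext {A : Type} [AddCommGroup A] {φ ψ : (stdWall P k).carrier.Neg →+ A}
    (ha : ∀ i, φ (stdA i) = ψ (stdA i)) : φ = ψ :=
  AddMonoidHom.functions_ext' (M := fun _ => ℤ) A φ ψ fun i => AddMonoidHom.ext_int (ha i)

theorem stdPos_hom_ext {A : Type} [AddCommGroup A] {φ ψ : (stdWall P k).carrier.Pos →+ A}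
    (hb : ∀ i, φ (stdB i) = ψ (stdB i))
    (htau : ∀ i h, φ ((stdWall P k).carrier.tau (stdA i) h)
      = ψ ((stdWall P k).carrier.tau (stdA i) h)) : φ = ψ := by
  have on_fst : ∀ v : Fin k → ℤ, φ (v, 0) = ψ (v, 0) := by
    let inl : (Fin k → ℤ) →+ (stdWall P k).carrier.Pos := AddMonoidHom.inl _ _
    exact DFunLike.congr_fun <| AddMonoidHom.functions_ext' (M := fun _ => ℤ) _ (φ.comp inl)
      (ψ.comp inl) fun i => AddMonoidHom.ext_int (hb i)
  have on_snd : ∀ u : Fin k → H, φ (0, u) = ψ (0, u) := by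
    let inr : (Fin k → H) →+ (stdWall P k).carrier.Pos := AddMonoidHom.inr _ _
    refine DFunLike.congr_fun (AddMonoidHom.functions_ext _ (φ.comp inr) (ψ.comp inr) ?_)
    intro i h
    show φ (0, Pi.single i h) = ψ (0, Pi.single i h)
    rw [← stdWall_tau_stdA, htau]
  ext w
  calc φ w = φ (w.1, 0) + φ (0, w.2) := (congrArg φ (Prod.fst_add_snd w).symm).trans (map_add φ _ _)
    _ = ψ (w.1, 0) + ψ (0, w.2) := by rw [on_fst, on_snd]
    _ = ψ w := ((congrArg ψ (Prod.fst_add_snd w).symm).trans (map_add ψ _ _)).symm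

theorem HPairHom.ext_stdWall {C : HPair H} {f g : HPairHom (stdWall P k).carrier C}
    (ha : ∀ i, f.neg (stdA i) = g.neg (stdA i)) (hb : ∀ i, f.pos (stdB i) = g.pos (stdB i)) :
    f = g :=
  HPairHom.ext (stdNeg_hom_ext ha) <| stdPos_hom_ext hb fun i h =>
    (f.comm _ _).trans <| (congrArg (C.tau · h) (ha i)).trans (g.comm _ _).symm

end StdWallGenerators

section StdWallMorphisms

variable {H : Type} [AddCommGroup H] [AddGroup.FG H] {P : FormParameter H} {k : ℕ}

theorem isWallHom_of_stdWall {C : HPair H} {T : WallAux P C}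
    {f : HPairHom (stdWall P k).carrier C}
    (hlam : ∀ i j, T.lam (f.neg (stdA i)) (f.pos (stdB j)) = if i = j then 1 else 0)
    (hmu : ∀ i j, T.mu (f.pos (stdB i)) (f.pos (stdB j)) = 0)
    (han : ∀ i, T.alphaNeg (f.neg (stdA i)) = 0)
    (hap : ∀ i, T.alphaPos (f.pos (stdB i)) = 0) :
    IsWallHom (stdWall P k).str T f := by
  set S := (stdWall P k).str
  have lam_eq : ∀ v w, T.lam (f.neg v) (f.pos w) = S.lam v w := by
    have on_stdA : ∀ i w, T.lam (f.neg (stdA i)) (f.pos w) = S.lam (stdA i) w := fun i =>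
      DFunLike.congr_fun <| stdPos_hom_ext (φ := (T.lam (f.neg (stdA i))).comp f.pos)
        (ψ := S.lam (stdA i)) (fun j => (hlam i j).trans (stdWall_lam_stdA_stdB i j).symm)
        fun j h => by simp [f.comm, T.lam_tau, S.lam_tau]
    intro v w
    exact DFunLike.congr_fun (stdNeg_hom_ext (φ := (T.lam.flip (f.pos w)).comp f.neg)
      (ψ := S.lam.flip w) fun i => on_stdA i w) v
  have mu_eq : ∀ w w', T.mu (f.pos w) (f.pos w') = S.mu w w' := by
    have on_stdB : ∀ i w', T.mu (f.pos (stdB i)) (f.pos w') = S.mu (stdB i) w' := fun i =>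
      DFunLike.congr_fun <| stdPos_hom_ext (φ := (T.mu (f.pos (stdB i))).comp f.pos)
        (ψ := S.mu (stdB i)) (fun j => (hmu i j).trans (stdWall_mu_stdB_stdB i j).symm)
        fun j h => mu_map_tau_right_of_lam lam_eq _ _ _
    intro w w'
    exact DFunLike.congr_fun (stdPos_hom_ext (φ := (T.mu.flip (f.pos w')).comp f.pos)
      (ψ := S.mu.flip w') (fun i => on_stdB i w') fun i h => mu_map_tau_left_of_lam lam_eq _ _ _) w
  have alphaNeg_eq : ∀ v, T.alphaNeg (f.neg v) = S.alphaNeg v :=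
    DFunLike.congr_fun <| stdNeg_hom_ext (φ := T.alphaNeg.comp f.neg) (ψ := S.alphaNeg) han
  refine ⟨lam_eq, mu_eq, alphaNeg_eq, alphaPos_map_eq_of_alphaPosDefect_eq_zero (hmu := mu_eq) ?_⟩
  refine stdPos_hom_ext (fun i => ?_) fun i h => ?_
  · show T.alphaPos (f.pos (stdB i)) - S.alphaPos (stdB i) = 0
    rw [hap, stdWall_alphaPos_stdB, sub_zero]
  · exact sub_eq_zero.mpr (alphaPos_map_tau_of_alphaNeg alphaNeg_eq _ _)

def stdLift {C : HPair H} (x : Fin k → C.Neg) (y : Fin k → C.Pos) :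
    HPairHom (stdWall P k).carrier C where
  neg := AddMonoidHom.mk' (fun v : Fin k → ℤ => ∑ i, v i • x i) fun v v' => by
    show ∑ i, (v i + v' i) • x i = ∑ i, v i • x i + ∑ i, v' i • x i
    simp only [add_smul, Finset.sum_add_distrib]
  pos := AddMonoidHom.mk'
    (fun w : (Fin k → ℤ) × (Fin k → H) => ∑ i, (w.1 i • y i + C.tau (x i) (w.2 i)))
    fun w w' => by
      show ∑ i, ((w.1 i + w'.1 i) • y i + C.tau (x i) (w.2 i + w'.2 i))
        = ∑ i, (w.1 i • y i + C.tau (x i) (w.2 i)) + ∑ i, (w'.1 i • y i + C.tau (x i) (w'.2 i))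
      simp only [add_smul, map_add, Finset.sum_add_distrib]
      abel
  comm v h := by
    show ∑ i, ((0 : Fin k → ℤ) i • y i + C.tau (x i) (v i • h)) = C.tau (∑ i, v i • x i) h
    simp [AddMonoidHom.finsetSum_apply]

theorem stdLift_neg_stdA {C : HPair H} (x : Fin k → C.Neg) (y : Fin k → C.Pos) (i : Fin k) :
    (stdLift (P := P) x y).neg (stdA i) = x i := by
  show ∑ j, (Pi.single i 1 : Fin k → ℤ) j • x j = x i
  simp [Pi.single_apply]

theorem stdLift_pos_stdB {C : HPair H} (x : Fin k → C.Neg) (y : Fin k → C.Pos) (i : Fin k) :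
    (stdLift (P := P) x y).pos (stdB i) = y i := by
  show ∑ j, ((Pi.single i 1 : Fin k → ℤ) j • y j + C.tau (x j) ((0 : Fin k → H) j)) = y i
  simp [Pi.single_apply]

end StdWallMorphisms

/-- Elements `x_1, …, x_k ∈ M₋`, `y_1, …, y_k ∈ M₊` with
`λ(x_i, y_j) = δ_ij`, `μ(y_i, y_j) = 0`, `α₋(x_i) = 0`, `α₊(y_i) = 0`
determine a unique morphism `f : W^k → M` with `f₋(a_i) = x_i`,
`f₊(b_i) = y_i`. -/
theorem statement_4 {H : Type} [AddCommGroup H] [AddGroup.FG H]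
    (P : FormParameter H) (M : WallForm P) (k : ℕ)
    (x : Fin k → M.carrier.Neg) (y : Fin k → M.carrier.Pos)
    (hlam : ∀ i j, M.str.lam (x i) (y j) = if i = j then 1 else 0)
    (hmu : ∀ i j, M.str.mu (y i) (y j) = 0)
    (han : ∀ i, M.str.alphaNeg (x i) = 0)
    (hap : ∀ i, M.str.alphaPos (y i) = 0) :
    ∃! f : WallHom (stdWall P k) M,
      (∀ i, f.hom.neg (stdA i) = x i) ∧ (∀ i, f.hom.pos (stdB i) = y i) := by
  have hwall : IsWallHom (stdWall P k).str M.str (stdLift x y) :=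
    isWallHom_of_stdWall (by simpa only [stdLift_neg_stdA, stdLift_pos_stdB] using hlam)
      (by simpa only [stdLift_pos_stdB] using hmu) (by simpa only [stdLift_neg_stdA] using han)
      (by simpa only [stdLift_pos_stdB] using hap)
  refine ⟨⟨stdLift x y, hwall⟩, ⟨stdLift_neg_stdA x y, stdLift_pos_stdB x y⟩, ?_⟩
  rintro g ⟨hga, hgb⟩
  exact WallHom.ext <| HPairHom.ext_stdWall (fun i => (hga i).trans (stdLift_neg_stdA x y i).symm)
    fun i => (hgb i).trans (stdLift_pos_stdB x y i).symm
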